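/- Let 0 < k < n be integers, let κ_1 < κ_2 < ⋯ < κ_n be real numbers, and let A be a real k×n matrix of rank k that is totally nonnegative. Then the KP-II tau function τ(x,y,t) of the data (κ, A) is strictly positive for all real (x,y,t). -/

import Mathlib

open scoped BigOperators

/-- The maximal minor `Δ_I(A)` of a real `k × n` matrix `A` on the column set `I`
(columns taken in increasing order); junk value `0` if `I` does not have `k` elements. -/
noncomputable def kpMinor (k n : ℕ) (A : Matrix (Fin k) (Fin n) ℝ) (I : Finset (Fin n)) : ℝ :=
  if h : I.card = k then (A.submatrix id fun a => I.orderEmbOfFin h a).det else 0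

/-- `A` is totally nonnegative: all maximal minors are nonnegative. -/
def TotallyNonneg (k n : ℕ) (A : Matrix (Fin k) (Fin n) ℝ) : Prop :=
  ∀ I : Finset (Fin n), I.card = k → 0 ≤ kpMinor k n A I

/-- The Vandermonde factor `∏_{a<b} (κ_{i_b} - κ_{i_a})` attached to a `k`-element
column set `I = {i_1 < ⋯ < i_k}`. -/
noncomputable def kpVdm (k n : ℕ) (κ : Fin n → ℝ) (I : Finset (Fin n)) : ℝ :=
  if h : I.card = k then
    ∏ p ∈ Finset.univ.filter fun p : Fin k × Fin k => p.1 < p.2,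
      (κ (I.orderEmbOfFin h p.2) - κ (I.orderEmbOfFin h p.1))
  else 0

/-- The KP-II tau function of the data `(κ, A)`:
`τ(x,y,t) = Σ_I Δ_I(A) ∏_{a<b}(κ_{i_b}-κ_{i_a}) exp(Σ_{i∈I} (κ_i x + κ_i² y + κ_i³ t))`. -/
noncomputable def kpTau (k n : ℕ) (κ : Fin n → ℝ) (A : Matrix (Fin k) (Fin n) ℝ)
    (x y t : ℝ) : ℝ :=
  ∑ I ∈ Finset.powersetCard k (Finset.univ : Finset (Fin n)),
    kpMinor k n A I * kpVdm k n κ I *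
      Real.exp (∑ i ∈ I, (κ i * x + κ i ^ 2 * y + κ i ^ 3 * t))

/-! Each summand of `τ` is a nonnegative minor times a positive Vandermonde product times an
exponential, so `τ ≥ 0`. Rank `k` yields `k` linearly independent columns, i.e. a nonzero and hence
positive maximal minor, whose summand makes `τ` strictly positive. -/

theorem Matrix.exists_linearIndepOn_col_card_eq_rank {K m n : Type*} [Field K] [Fintype n]
    (A : Matrix m n K) :
    ∃ s : Finset n, s.card = A.rank ∧ LinearIndepOn K A.col (s : Set n) := by
  classical
  obtain ⟨b, -, -, hspan, hli⟩ :=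
    exists_linearIndepOn_extension (linearIndepOn_empty K A.col) (Set.empty_subset Set.univ)
  refine ⟨b.toFinset, ?_, by simpa using hli⟩
  have hspan_eq : Submodule.span K (Set.range A.col) = Submodule.span K (A.col '' b) := by
    refine le_antisymm (Submodule.span_le.2 ?_) (Submodule.span_mono (Set.image_subset_range _ _))
    simpa [Set.image_univ] using hspan
  rw [A.rank_eq_finrank_span_cols, hspan_eq, Set.image_eq_range, finrank_span_eq_card hli,
    Set.toFinset_card]

theorem kpMinor_ne_zero_of_linearIndepOn {k n : ℕ} {A : Matrix (Fin k) (Fin n) ℝ}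
    {I : Finset (Fin n)} (hI : I.card = k) (hli : LinearIndepOn ℝ A.col (I : Set (Fin n))) :
    kpMinor k n A I ≠ 0 := by
  rw [kpMinor, dif_pos hI]
  refine (Matrix.isUnit_iff_isUnit_det _ |>.1 ?_).ne_zero
  rw [← Matrix.linearIndependent_cols_iff_isUnit]
  exact hli.comp _ (I.orderIsoOfFin hI).injective

theorem kpVdm_pos {k n : ℕ} {κ : Fin n → ℝ} (hκ : StrictMono κ) {I : Finset (Fin n)}
    (hI : I.card = k) : 0 < kpVdm k n κ I := by
  rw [kpVdm, dif_pos hI]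
  refine Finset.prod_pos fun p hp => sub_pos.2 (hκ ((I.orderEmbOfFin hI).strictMono ?_))
  exact (Finset.mem_filter.1 hp).2

theorem exists_kpMinor_pos {k n : ℕ} {A : Matrix (Fin k) (Fin n) ℝ} (hrank : A.rank = k)
    (hA : TotallyNonneg k n A) : ∃ I : Finset (Fin n), I.card = k ∧ 0 < kpMinor k n A I := by
  obtain ⟨I, hcard, hli⟩ := A.exists_linearIndepOn_col_card_eq_rank
  rw [hrank] at hcard
  exact ⟨I, hcard, (hA I hcard).lt_of_ne' (kpMinor_ne_zero_of_linearIndepOn hcard hli)⟩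

theorem kpTau_pos_general (k n : ℕ)
    (κ : Fin n → ℝ) (hκ : StrictMono κ)
    (A : Matrix (Fin k) (Fin n) ℝ) (hrank : A.rank = k) (hA : TotallyNonneg k n A) :
    ∀ x y t : ℝ, 0 < kpTau k n κ A x y t := by
  intro x y t
  refine Finset.sum_pos' (fun I hI => ?_) ?_
  · rw [Finset.mem_powersetCard_univ] at hI
    have hminor := hA I hI
    have hvdm := (kpVdm_pos hκ hI).le
    positivity
  · obtain ⟨I, hI, hminor⟩ := exists_kpMinor_pos hrank hA
    have hvdm := kpVdm_pos hκ hI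
    exact ⟨I, Finset.mem_powersetCard_univ.2 hI, by positivity⟩

/-- for `0 < k < n`, strictly increasing real phases `κ₁ < ⋯ < κ_n`,
and a totally nonnegative real `k × n` matrix `A` of rank `k`, the KP-II tau function of
`(κ, A)` is strictly positive at every real `(x,y,t)`. -/
theorem kpTau_pos (k n : ℕ) (hk : 0 < k) (hkn : k < n)
    (κ : Fin n → ℝ) (hκ : StrictMono κ)
    (A : Matrix (Fin k) (Fin n) ℝ) (hrank : A.rank = k) (hA : TotallyNonneg k n A) :
    ∀ x y t : ℝ, 0 < kpTau k n κ A x y t :=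
  kpTau_pos_general k n κ hκ A hrank hA
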